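/- Let a_1, ..., a_d be real numbers with ∏_j a_j⁺ - ∑_j a_j⁻ ≥ 0. Then a_j ≥ 0 for all j, and ∏_j a_j⁺ - ∑_j a_j⁻ = ∏_j a_j. -/
import Mathlib


open Finset in
theorem nonneg_parts_nonneg (d : ℕ) (hd : 1 ≤ d) (a : Fin d → ℝ)
    (hpos : 0 ≤ ∏ j, max (a j) 0 - ∑ j, max (-a j) 0) :
    (∀ j, 0 ≤ a j) ∧
      ∏ j, max (a j) 0 - ∑ j, max (-a j) 0 = ∏ j, a j := by
  have hnn : ∀ j, 0 ≤ a j := by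
    by_contra h
    push_neg at h
    obtain ⟨k, hk⟩ := h
    have hprod : ∏ j, max (a j) 0 = 0 :=
      Finset.prod_eq_zero (Finset.mem_univ k) (by simp [max_eq_right hk.le])
    have hsum : -a k ≤ ∑ j, max (-a j) 0 := by
      calc -a k ≤ max (-a k) 0 := le_max_left _ _
        _ ≤ ∑ j, max (-a j) 0 :=
          Finset.single_le_sum (f := fun j => max (-a j) 0) (fun j _ => le_max_right _ _) (Finset.mem_univ k)
    nlinarith
  refine ⟨hnn, ?_⟩
  have h1 : ∀ j, max (-a j) 0 = 0 := fun j => max_eq_right (neg_nonpos.mpr (hnn j))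
  have h2 : ∀ j, max (a j) 0 = a j := fun j => max_eq_left (hnn j)
  simp [h1, h2]
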